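/- Let (X, T) be a uniquely ergodic classical dynamical system with unique invariant measure μ, let λ ∈ ℂ with |λ| = 1, and let u : X → ℂ be continuous, not identically zero, with u(T x) = λ·u(x) for all x ∈ X. Then the class of u in L²(X, μ) is a nonzero eigenvector of the Koopman operator with eigenvalue λ: one has ‖u‖_{L²(μ)} > 0 and u∘T = λ·u μ-almost everywhere. In particular, every continuous peripheral eigenvalue of the system is also a peripheral eigenvalue of the Koopman operator on L²(X, μ). -/

import Mathlib

/-!
The modulus `‖u‖` is a continuous `T`-invariant function, constant equal to `‖u x₀‖ ≠ 0` along
the orbit of some point `x₀`. Limits of the Birkhoff averages along that orbit, taken in an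
ultrafilter finer than `atTop`, define a positive linear functional on `C(X, ℝ)`; it is
`T`-invariant because the averages of `f ∘ T` and of `f` differ by `O(1/n)`. Its
Riesz–Markov–Kakutani measure is therefore a regular invariant probability measure `ν` with
`∫ ‖u‖ ∂ν = ‖u x₀‖ > 0`. Unique ergodicity gives `ν = μ`, so `u` is not `μ`-a.e. zero.
-/

open MeasureTheory Filter Set Topology Bornology CompactlySupported

theorem Ultrafilter.tendsto_limUnder_of_isBounded {ι E : Type*} [PseudoMetricSpace E]
    [ProperSpace E] [Nonempty E] (𝒰 : Ultrafilter ι) {a : ι → E} (ha : IsBounded (range a)) :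
    Tendsto a 𝒰 (𝓝 (limUnder 𝒰 a)) := by
  obtain ⟨x, -, hx⟩ := ha.isCompact_closure.ultrafilter_le_nhds (𝒰.map a) <|
    le_principal_iff.2 <| Ultrafilter.mem_map.2 <|
      univ_mem' fun i => subset_closure (mem_range_self i)
  exact tendsto_nhds_limUnder ⟨x, hx⟩

theorem CompactlySupportedContinuousMap.isBounded_range {X E : Type*} [TopologicalSpace X]
    [PseudoMetricSpace E] [Zero E] (f : C_c(X, E)) : IsBounded (range f) :=
  (f.hasCompactSupport.isCompact_range f.continuous).isBounded

section BirkhoffAverage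

variable {α : Type*} {f : α → α}

theorem norm_birkhoffAverage_le (𝕜 : Type*) {E : Type*} [RCLike 𝕜] [NormedAddCommGroup E]
    [NormedSpace 𝕜 E] {g : α → E} {C : ℝ} (hg : ∀ y, ‖g y‖ ≤ C) (n : ℕ) (x : α) :
    ‖birkhoffAverage 𝕜 f g n x‖ ≤ C := by
  rw [birkhoffAverage, norm_smul, norm_inv, RCLike.norm_natCast]
  rcases n.eq_zero_or_pos with rfl | hn
  · simpa using (norm_nonneg _).trans (hg x)
  rw [inv_mul_le_iff₀ (by positivity)]
  calc ‖birkhoffSum f g n x‖ ≤ ∑ _k ∈ Finset.range n, C :=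
        norm_sum_le_of_le _ fun k _ => hg _
    _ = n * C := by simp

theorem isBounded_range_birkhoffAverage (𝕜 : Type*) {E : Type*} [RCLike 𝕜]
    [NormedAddCommGroup E] [NormedSpace 𝕜 E] {g : α → E} (hg : IsBounded (range g)) (x : α) :
    IsBounded (range (birkhoffAverage 𝕜 f g · x)) := by
  obtain ⟨C, hC⟩ := isBounded_iff_forall_norm_le.1 hg
  exact isBounded_iff_forall_norm_le.2
    ⟨C, forall_mem_range.2 fun n => norm_birkhoffAverage_le 𝕜 (fun y => hC _ ⟨y, rfl⟩) n x⟩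

theorem birkhoffAverage_comp {R M : Type*} [DivisionSemiring R] [AddCommMonoid M] [Module R M]
    (g : α → M) (n : ℕ) (x : α) :
    birkhoffAverage R f (g ∘ f) n x = birkhoffAverage R f g n (f x) := by
  simp only [birkhoffAverage, birkhoffSum, Function.comp_apply, ← Function.iterate_succ_apply' f,
    Function.iterate_succ_apply]

theorem birkhoffAverage_smul {R M : Type*} [Semifield R] [AddCommMonoid M] [Module R M] (c : R)
    (g : α → M) : birkhoffAverage R f (c • g) = c • birkhoffAverage R f g := by
  funext n x
  simp only [birkhoffAverage, birkhoffSum, Pi.smul_apply, ← Finset.smul_sum]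
  exact smul_comm _ _ _

theorem birkhoffAverage_mono_real {g g' : α → ℝ} (h : g ≤ g') (n : ℕ) (x : α) :
    birkhoffAverage ℝ f g n x ≤ birkhoffAverage ℝ f g' n x :=
  smul_le_smul_of_nonneg_left (Finset.sum_le_sum fun k _ => h _) (by positivity)

end BirkhoffAverage

section BirkhoffUltralim

variable {α : Type*} (𝒰 : Ultrafilter ℕ) (f : α → α) {g g' : α → ℝ} (x : α)

noncomputable def birkhoffUltralim (g : α → ℝ) : ℝ :=
  limUnder 𝒰 (birkhoffAverage ℝ f g · x)

theorem tendsto_birkhoffUltralim (hg : IsBounded (range g)) :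
    Tendsto (birkhoffAverage ℝ f g · x) 𝒰 (𝓝 (birkhoffUltralim 𝒰 f x g)) :=
  𝒰.tendsto_limUnder_of_isBounded (isBounded_range_birkhoffAverage ℝ hg x)

theorem birkhoffUltralim_add (hg : IsBounded (range g)) (hg' : IsBounded (range g')) :
    birkhoffUltralim 𝒰 f x (g + g') = birkhoffUltralim 𝒰 f x g + birkhoffUltralim 𝒰 f x g' := by
  refine Tendsto.limUnder_eq ?_
  rw [birkhoffAverage_add]
  exact (tendsto_birkhoffUltralim 𝒰 f x hg).add (tendsto_birkhoffUltralim 𝒰 f x hg')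

theorem birkhoffUltralim_smul (c : ℝ) (hg : IsBounded (range g)) :
    birkhoffUltralim 𝒰 f x (c • g) = c * birkhoffUltralim 𝒰 f x g := by
  refine Tendsto.limUnder_eq ?_
  rw [birkhoffAverage_smul]
  exact (tendsto_birkhoffUltralim 𝒰 f x hg).const_mul c

theorem birkhoffUltralim_mono (hg : IsBounded (range g)) (hg' : IsBounded (range g'))
    (h : g ≤ g') : birkhoffUltralim 𝒰 f x g ≤ birkhoffUltralim 𝒰 f x g' :=
  le_of_tendsto_of_tendsto' (tendsto_birkhoffUltralim 𝒰 f x hg)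
    (tendsto_birkhoffUltralim 𝒰 f x hg') (birkhoffAverage_mono_real h · x)

variable {𝒰}

theorem birkhoffUltralim_comp (h𝒰 : (𝒰 : Filter ℕ) ≤ atTop) (hg : IsBounded (range g)) :
    birkhoffUltralim 𝒰 f x (g ∘ f) = birkhoffUltralim 𝒰 f x g := by
  refine Tendsto.limUnder_eq ?_
  have hdiff := (tendsto_birkhoffAverage_apply_sub_birkhoffAverage' ℝ hg f x).mono_left h𝒰
  simpa [birkhoffAverage_comp] using (tendsto_birkhoffUltralim 𝒰 f x hg).add hdiff

theorem birkhoffUltralim_of_comp_eq (h𝒰 : (𝒰 : Filter ℕ) ≤ atTop) (h : g ∘ f = g) :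
    birkhoffUltralim 𝒰 f x g = g x := by
  refine Tendsto.limUnder_eq (tendsto_const_nhds.congr' ?_)
  filter_upwards [h𝒰 (eventually_ne_atTop 0)] with n hn
  rw [birkhoffAverage_of_comp_eq (R := ℝ) h (Nat.cast_ne_zero.2 hn)]

end BirkhoffUltralim

section InvariantMeasure

variable {X : Type*} [TopologicalSpace X] [T2Space X] [MeasurableSpace X] [BorelSpace X]

theorem MeasureTheory.Measure.map_eq_self_of_integral_comp_eq [LocallyCompactSpace X] {T : X → X}
    (hT : Continuous T) {ν : Measure X} [ν.Regular] [IsFiniteMeasure ν]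
    (h : ∀ f : C_c(X, ℝ), ∫ x, f (T x) ∂ν = ∫ x, f x ∂ν) : ν.map T = ν := by
  have : InnerRegularCompactLTTop (ν.map T) := InnerRegularCompactLTTop.map_of_continuous hT
  refine Measure.ext_of_integral_eq_on_compactlySupported fun f => ?_
  rw [integral_map hT.aemeasurable (map_continuous f).aestronglyMeasurable, h]

noncomputable def birkhoffUltralimFunctional (𝒰 : Ultrafilter ℕ) (T : X → X) (x₀ : X) :
    C_c(X, ℝ) →ₚ[ℝ] ℝ where
  toFun f := birkhoffUltralim 𝒰 T x₀ f
  map_add' f g := birkhoffUltralim_add 𝒰 T x₀ f.isBounded_range g.isBounded_range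
  map_smul' c f := birkhoffUltralim_smul 𝒰 T x₀ c f.isBounded_range
  monotone' f g h := birkhoffUltralim_mono 𝒰 T x₀ f.isBounded_range g.isBounded_range h

theorem exists_invariant_probabilityMeasure_integral_eq [CompactSpace X] {T : X → X}
    (hT : Continuous T) (x₀ : X) {g : C(X, ℝ)} (hg : g ∘ T = g) :
    ∃ ν : Measure X, IsProbabilityMeasure ν ∧ ν.Regular ∧ ν.map T = ν ∧ ∫ x, g x ∂ν = g x₀ := by
  obtain ⟨𝒰, h𝒰⟩ := exists_ultrafilter_le (atTop : Filter ℕ)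
  set ν := RealRMK.rieszMeasure (birkhoffUltralimFunctional 𝒰 T x₀)
  have hν (f : C(X, ℝ)) : ∫ x, f x ∂ν = birkhoffUltralim 𝒰 T x₀ f :=
    RealRMK.integral_rieszMeasure _ (CompactlySupportedContinuousMap.continuousMapEquiv f)
  refine ⟨ν, ?_, inferInstance, ?_, ?_⟩
  · rw [isProbabilityMeasure_iff_real]
    simpa [birkhoffUltralim_of_comp_eq T x₀ h𝒰 (rfl : (1 : X → ℝ) ∘ T = 1)]
      using hν (ContinuousMap.const X 1)
  · refine Measure.map_eq_self_of_integral_comp_eq hT fun f => ?_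
    calc ∫ x, f (T x) ∂ν = birkhoffUltralim 𝒰 T x₀ (f ∘ T) := hν ((f : C(X, ℝ)).comp ⟨T, hT⟩)
      _ = birkhoffUltralim 𝒰 T x₀ f := birkhoffUltralim_comp T x₀ h𝒰 f.isBounded_range
      _ = ∫ x, f x ∂ν := (hν f).symm
  · rw [hν, birkhoffUltralim_of_comp_eq T x₀ h𝒰 hg]

end InvariantMeasure

theorem stmt11_general {X : Type*} [TopologicalSpace X] [CompactSpace X] [T2Space X]
    [MeasurableSpace X] [BorelSpace X]
    (T : X → X) (hT : Continuous T)
    (μ : Measure X)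
    (huniq : ∀ ν : Measure X, IsProbabilityMeasure ν → ν.Regular →
      Measure.map T ν = ν → ν = μ)
    (lam : ℂ) (hlam : ‖lam‖ = 1)
    (u : X → ℂ) (hu : Continuous u) (hu0 : ¬ ∀ x, u x = 0)
    (heig : ∀ x, u (T x) = lam * u x) :
    0 < eLpNorm u 2 μ ∧ ∀ᵐ x ∂μ, u (T x) = lam * u x := by
  refine ⟨?_, .of_forall heig⟩
  obtain ⟨x₀, hx₀⟩ := not_forall.mp hu0
  have hnorm : (fun x => ‖u x‖) ∘ T = fun x => ‖u x‖ := funext fun x => by simp [heig, hlam]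
  obtain ⟨ν, hνprob, hνreg, hνinv, hνint⟩ := exists_invariant_probabilityMeasure_integral_eq hT x₀
    (g := ⟨fun x => ‖u x‖, by fun_prop⟩) hnorm
  obtain rfl := huniq ν hνprob hνreg hνinv
  refine pos_iff_ne_zero.2 fun h => hx₀ ?_
  have hu_ae : u =ᵐ[ν] 0 := (eLpNorm_eq_zero_iff hu.aestronglyMeasurable two_ne_zero).1 h
  have hint : ∫ x, ‖u x‖ ∂ν = 0 :=
    integral_eq_zero_of_ae (hu_ae.mono fun x hx => by simp [hx])
  exact norm_eq_zero.1 (hνint.symm.trans hint)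

/-- For a uniquely ergodic system `(X, T, μ)`, a nonzero continuous eigenfunction `u` with
unimodular eigenvalue `λ` yields a nonzero eigenvector of the Koopman operator on `L²(X, μ)`:
`‖u‖_{L²(μ)} > 0` and `u∘T = λ·u` μ-a.e. -/
theorem stmt11 {X : Type*} [TopologicalSpace X] [CompactSpace X] [T2Space X] [Nonempty X]
    [MeasurableSpace X] [BorelSpace X]
    (T : X → X) (hT : Continuous T)
    (μ : Measure X) [IsProbabilityMeasure μ] [μ.Regular] (hμ : Measure.map T μ = μ)
    (huniq : ∀ ν : Measure X, IsProbabilityMeasure ν → ν.Regular →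
      Measure.map T ν = ν → ν = μ)
    (lam : ℂ) (hlam : ‖lam‖ = 1)
    (u : X → ℂ) (hu : Continuous u) (hu0 : ¬ ∀ x, u x = 0)
    (heig : ∀ x, u (T x) = lam * u x) :
    0 < eLpNorm u 2 μ ∧ ∀ᵐ x ∂μ, u (T x) = lam * u x :=
  stmt11_general T hT μ huniq lam hlam u hu hu0 heig
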